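/- arXiv:math/0303311 — 11 statements merged into one kernel-verified Lean document; each statement's English description precedes it below -/
import Mathlib

section
/- Let O be any orbit of the permutation g, and let α = |O ∩ [0,q'-2]|, β = |O ∩ {q'-1}|, γ = |O ∩ [q',n-1]|. Then (α+β)·p' = (β+γ)·q'. -/
/-!
`g` restricts to an injective self-map of any finite invariant subset of `[0, n)`, hence permutes
it, so the displacements `g j - j` sum to zero over an orbit. The displacement is `p'` below
`q' - 1`, `p' - q'` at `q' - 1` and `-q'` from `q'` on, i.e. `p' * [j < q'] - q' * [q' ≤ j + 1]`;
summing gives `(α + β) p' - (β + γ) q' = 0`.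
-/

def g (p' q' i : ℕ) : ℕ :=
  if i + 1 < q' then i + p' else if i + 1 = q' then p' - 1 else i - q'

open Finset

theorem Finset.sum_comp_eq_of_mapsTo_of_injOn {α M : Type*} [AddCommMonoid M] {s : Finset α}
    {f : α → α} (w : α → M) (hf : Set.MapsTo f s s) (hinj : Set.InjOn f s) :
    ∑ x ∈ s, w (f x) = ∑ x ∈ s, w x :=
  sum_nbij f hf hinj (surjOn_of_injOn_of_card_le f hf hinj le_rfl) fun _ _ ↦ rfl

theorem Set.MapsTo.sep_exists_iterate_eq {α : Type*} {f : α → α} {s : Set α}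
    (hf : Set.MapsTo f s s) (i : α) :
    Set.MapsTo f {j | j ∈ s ∧ ∃ k, f^[k] i = j} {j | j ∈ s ∧ ∃ k, f^[k] i = j} := by
  rintro _ ⟨hj, k, rfl⟩
  exact ⟨hf hj, k + 1, Function.iterate_succ_apply' ..⟩

theorem Set.Finite.ncard_inter_setOf_eq_add {α : Type*} {s : Set α} (hs : s.Finite)
    {P Q R : α → Prop} (hPQ : ∀ j, ¬(P j ∧ Q j)) (hR : ∀ j, R j ↔ P j ∨ Q j) :
    (s ∩ {j | R j}).ncard = (s ∩ {j | P j}).ncard + (s ∩ {j | Q j}).ncard := by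
  have hdisj : Disjoint (s ∩ {j | P j}) (s ∩ {j | Q j}) :=
    Set.disjoint_left.2 fun j hP hQ ↦ hPQ j ⟨hP.2, hQ.2⟩
  rw [← Set.ncard_union_eq hdisj (hs.inter_of_left _) (hs.inter_of_left _),
    ← Set.inter_union_distrib_left, ← Set.ofPred_or]
  simp only [hR]

theorem Finset.ncard_coe_inter_setOf {α : Type*} (s : Finset α) (P : α → Prop)
    [DecidablePred P] :
    ((s : Set α) ∩ {j | P j}).ncard = #(s.filter P) := by
  rw [← Set.ncard_coe_finset, coe_filter]
  rfl

section g

variable {p' q' : ℕ}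

lemma g_mapsTo : Set.MapsTo (g p' q') (Set.Iio (p' + q' - 1)) (Set.Iio (p' + q' - 1)) := by
  intro j hj
  simp only [Set.mem_Iio] at hj ⊢
  unfold g; split_ifs <;> omega

lemma g_injOn : Set.InjOn (g p' q') (Set.Iio (p' + q' - 1)) := by
  intro j₁ h₁ j₂ h₂ h
  simp only [Set.mem_Iio] at h₁ h₂
  unfold g at h; split_ifs at h <;> omega

lemma g_sub_self (hp : 1 ≤ p') (j : ℕ) :
    (g p' q' j : ℤ) - j =
      (if j < q' then (p' : ℤ) else 0) - (if q' ≤ j + 1 then (q' : ℤ) else 0) := by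
  unfold g; split_ifs <;> omega

theorem ncard_inter_lt_mul_eq_of_mapsTo (hp : 1 ≤ p') {s : Set ℕ}
    (hs : s ⊆ Set.Iio (p' + q' - 1)) (hmaps : Set.MapsTo (g p' q') s s) :
    (s ∩ {j | j < q'}).ncard * p' = (s ∩ {j | q' ≤ j + 1}).ncard * q' := by
  obtain ⟨s, rfl⟩ := ((Set.finite_Iio _).subset hs).exists_finset_coe
  have hbal : ∑ j ∈ s, ((g p' q' j : ℤ) - j) = 0 := by
    rw [sum_sub_distrib, sum_comp_eq_of_mapsTo_of_injOn (fun j : ℕ ↦ (j : ℤ)) hmaps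
      (g_injOn.mono hs), sub_self]
  simp only [g_sub_self hp, sum_sub_distrib, ← sum_filter, sum_const, nsmul_eq_mul,
    sub_eq_zero] at hbal
  rw [ncard_coe_inter_setOf, ncard_coe_inter_setOf]
  exact_mod_cast hbal

end g

theorem stmt_4_general (p' q' n : ℕ) (hp : 1 ≤ p') (hn : p' + q' - 1 = n)
    (i : ℕ)
    (O : Set ℕ) (hO : O = {j | j < n ∧ ∃ k : ℕ, (g p' q')^[k] i = j})
    (a b c : ℕ)
    (ha : a = (O ∩ {j | j + 1 < q'}).ncard)
    (hb : b = (O ∩ {j | j + 1 = q'}).ncard)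
    (hc : c = (O ∩ {j | q' ≤ j}).ncard) :
    (a + b) * p' = (b + c) * q' := by
  subst hn
  have hO_sub : O ⊆ Set.Iio (p' + q' - 1) := hO ▸ fun _ hj ↦ hj.1
  have hO_mapsTo : Set.MapsTo (g p' q') O O := hO ▸ g_mapsTo.sep_exists_iterate_eq i
  have hO_fin : O.Finite := (Set.finite_Iio _).subset hO_sub
  have hab : (O ∩ {j | j < q'}).ncard = a + b := by
    rw [ha, hb]
    exact hO_fin.ncard_inter_setOf_eq_add (fun _ ↦ by omega) fun _ ↦ by omega
  have hbc : (O ∩ {j | q' ≤ j + 1}).ncard = b + c := by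
    rw [hb, hc]
    exact hO_fin.ncard_inter_setOf_eq_add (fun _ ↦ by omega) fun _ ↦ by omega
  rw [← hab, ← hbc]
  exact ncard_inter_lt_mul_eq_of_mapsTo hp hO_sub hO_mapsTo

theorem stmt_4 (p' q' n : ℕ) (hp : 1 ≤ p') (hq : 1 ≤ q') (hn : p' + q' - 1 = n)
    (i : ℕ) (hi : i < n)
    (O : Set ℕ) (hO : O = {j | j < n ∧ ∃ k : ℕ, (g p' q')^[k] i = j})
    (a b c : ℕ)
    (ha : a = (O ∩ {j | j + 1 < q'}).ncard)
    (hb : b = (O ∩ {j | j + 1 = q'}).ncard)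
    (hc : c = (O ∩ {j | q' ≤ j}).ncard) :
    (a + b) * p' = (b + c) * q' :=
  stmt_4_general p' q' n hp hn i O hO a b c ha hb hc
end

section
/- Every orbit O of the permutation g satisfies |O| ≥ (n+1)/λ − δ, where λ = gcd(p',q') and δ = 1 if q'-1 ∈ O, δ = 0 otherwise. -/
/-!
Read modulo `n + 1 = p' + q'`, the map `g` is the rotation `x ↦ x + p'` of `ZMod (n + 1)`
with the single point `-1 = n` skipped: `g` is the first-return map of the rotation to the
complement of `-1`. The rotation orbit of `i` has `(n + 1) / gcd (n + 1) p' = (n + 1) / λ`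
points, and all of them except possibly `-1` lie in the `g`-orbit of `i`. If `-1` does lie on
the rotation orbit, its predecessor `q' - 1` is on the `g`-orbit.
-/

open Function Set

section FirstReturn

variable {α : Type*} {f : α → α} {S : Set α} {x : α}

open Classical in
/-- The first-return map of `f` to `S`, provided `f` maps the complement of `S` into `S`. -/
noncomputable def firstReturn (f : α → α) (S : Set α) (x : α) : α :=
  if f x ∈ S then f x else f (f x)

theorem exists_iterate_firstReturn_eq_iterate (hf : ∀ y ∉ S, f y ∈ S) (hx : x ∈ S) {m : ℕ}
    (hm : f^[m] x ∈ S) : ∃ k, (firstReturn f S)^[k] x = f^[m] x := by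
  induction m using Nat.strong_induction_on with
  | _ m ih =>
    match m with
    | 0 => exact ⟨0, rfl⟩
    | m + 1 =>
      by_cases hprev : f^[m] x ∈ S
      · obtain ⟨k, hk⟩ := ih m m.lt_succ_self hprev
        refine ⟨k + 1, ?_⟩
        rw [iterate_succ_apply'] at hm
        rw [iterate_succ_apply', hk, firstReturn, if_pos hm, iterate_succ_apply']
      · match m with
        | 0 => exact absurd hx hprev
        | m + 1 =>
          have hbefore : f^[m] x ∈ S := by
            by_contra h
            exact hprev (iterate_succ_apply' f m x ▸ hf _ h)
          obtain ⟨k, hk⟩ := ih m (by omega) hbefore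
          refine ⟨k + 1, ?_⟩
          rw [iterate_succ_apply'] at hprev
          rw [iterate_succ_apply', hk, firstReturn, if_neg hprev, iterate_succ_apply',
            iterate_succ_apply']

theorem exists_iterate_firstReturn_apply_eq_iterate (hf : ∀ y ∉ S, f y ∈ S) (hx : x ∈ S)
    {m : ℕ} (hm : f^[m] x ∉ S) : ∃ k, f ((firstReturn f S)^[k] x) = f^[m] x := by
  cases m with
  | zero => exact absurd hx hm
  | succ m =>
    have hprev : f^[m] x ∈ S := by
      by_contra h
      exact hm (iterate_succ_apply' f m x ▸ hf _ h)
    obtain ⟨k, hk⟩ := exists_iterate_firstReturn_eq_iterate hf hx hprev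
    exact ⟨k, by rw [hk, iterate_succ_apply']⟩

theorem ncard_image_iterate_Iio_minimalPeriod :
    ((f^[·] x) '' Iio (minimalPeriod f x)).ncard = minimalPeriod f x := by
  rw [iterate_injOn_Iio_minimalPeriod.ncard_image, ncard_Iio_nat]

variable [Finite α] {c : α}

theorem minimalPeriod_le_ncard_orbit_firstReturn_add_one (hfc : f c ≠ c) (hx : x ≠ c) :
    minimalPeriod f x ≤ (range fun k => (firstReturn f {c}ᶜ)^[k] x).ncard + 1 := by
  have hsub : (f^[·] x) '' Iio (minimalPeriod f x) \ {c} ⊆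
      range fun k => (firstReturn f {c}ᶜ)^[k] x := by
    rintro _ ⟨⟨m, -, rfl⟩, hm⟩
    exact exists_iterate_firstReturn_eq_iterate (by simpa using hfc) hx hm
  calc minimalPeriod f x = ((f^[·] x) '' Iio (minimalPeriod f x)).ncard :=
        ncard_image_iterate_Iio_minimalPeriod.symm
    _ ≤ ((f^[·] x) '' Iio (minimalPeriod f x) \ {c}).ncard + 1 := by
        have := pred_ncard_le_ncard_sdiff_singleton ((f^[·] x) '' Iio (minimalPeriod f x)) c
        omega
    _ ≤ _ := by grw [ncard_le_ncard hsub]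

theorem minimalPeriod_le_ncard_orbit_firstReturn (hf : Injective f) (hfc : f c ≠ c)
    (hx : x ≠ c) {b : α} (hb : f b = c)
    (hbx : b ∉ range fun k => (firstReturn f {c}ᶜ)^[k] x) :
    minimalPeriod f x ≤ (range fun k => (firstReturn f {c}ᶜ)^[k] x).ncard := by
  have hfS : ∀ y ∉ ({c}ᶜ : Set α), f y ∈ ({c}ᶜ : Set α) := by simpa using hfc
  have hne : ∀ m, f^[m] x ≠ c := by
    intro m hm
    obtain ⟨k, hk⟩ :=
      exists_iterate_firstReturn_apply_eq_iterate hfS hx (m := m) (by simpa using hm)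
    exact hbx ⟨k, hf (hk.trans (hm.trans hb.symm))⟩
  calc minimalPeriod f x = ((f^[·] x) '' Iio (minimalPeriod f x)).ncard :=
        ncard_image_iterate_Iio_minimalPeriod.symm
    _ ≤ _ := ncard_le_ncard <| by
        rintro _ ⟨m, -, rfl⟩
        exact exists_iterate_firstReturn_eq_iterate hfS hx (hne m)

end FirstReturn

theorem minimalPeriod_add_right {G : Type*} [AddGroup G] (a x : G) :
    minimalPeriod (· + a) x = addOrderOf a := by
  rw [addOrderOf, minimalPeriod_eq_minimalPeriod_iff]
  intro n
  rw [isPeriodicPt_add_iff_nsmul_eq_zero, IsPeriodicPt, IsFixedPt, add_right_iterate_apply,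
    add_eq_left]

theorem ZMod.natCast_self_eq_neg_one (n : ℕ) : ((n : ℕ) : ZMod (n + 1)) = -1 := by
  rw [eq_neg_iff_add_eq_zero]
  exact_mod_cast ZMod.natCast_self (n + 1)

theorem ZMod.natCast_ne_neg_one {a n : ℕ} (ha : a < n) : (a : ZMod (n + 1)) ≠ -1 := by
  rw [← ZMod.natCast_self_eq_neg_one]
  exact fun h => ha.ne (CharP.natCast_injOn_Iio _ (n + 1) (by simp; omega) (by simp) h)

section

variable {p' q' n : ℕ}

theorem mapsTo_g (hn : p' + q' = n + 1) : MapsTo (g p' q') (Iio n) (Iio n) := by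
  intro y (hy : y < n)
  show g p' q' y < n
  unfold g
  split_ifs <;> omega

theorem natCast_g (hn : p' + q' = n + 1) {y : ℕ} (hy : y < n) :
    ((g p' q' y : ℕ) : ZMod (n + 1)) = firstReturn (· + (p' : ZMod (n + 1))) {-1}ᶜ y := by
  have hcast {a b : ℕ} (h : a = b + (n + 1)) : (a : ZMod (n + 1)) = b := by
    rw [h, Nat.cast_add, ZMod.natCast_self, add_zero]
  unfold firstReturn
  simp only [mem_compl_singleton_iff, ← Nat.cast_add]
  rcases lt_trichotomy (y + 1) q' with h | h | h
  · rw [if_pos (ZMod.natCast_ne_neg_one (by omega)), g, if_pos h]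
  · rw [if_neg (not_not.2 (by rw [show y + p' = n by omega, ZMod.natCast_self_eq_neg_one])),
      hcast (a := y + p' + p') (b := p' - 1) (by omega), g, if_neg h.not_lt, if_pos h]
  · rw [hcast (a := y + p') (b := y - q') (by omega),
      if_pos (ZMod.natCast_ne_neg_one (by omega)), g, if_neg (by omega), if_neg (by omega)]

theorem natCast_iterate_g (hn : p' + q' = n + 1) {i : ℕ} (hi : i < n) (k : ℕ) :
    (((g p' q')^[k] i : ℕ) : ZMod (n + 1)) =
      (firstReturn (· + (p' : ZMod (n + 1))) {-1}ᶜ)^[k] i := by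
  induction k with
  | zero => rfl
  | succ k ih =>
    rw [iterate_succ_apply', iterate_succ_apply', ← ih, natCast_g hn ((mapsTo_g hn).iterate k hi)]

theorem natCast_image_orbit_g (hn : p' + q' = n + 1) {i : ℕ} (hi : i < n) :
    (Nat.cast : ℕ → ZMod (n + 1)) '' {j | j < n ∧ ∃ k, (g p' q')^[k] i = j} =
      range fun k => (firstReturn (· + (p' : ZMod (n + 1))) {-1}ᶜ)^[k] i := by
  have horbit : {j | j < n ∧ ∃ k, (g p' q')^[k] i = j} = range fun k => (g p' q')^[k] i := by
    ext j
    refine ⟨fun ⟨_, hj⟩ => hj, fun ⟨k, hk⟩ => ⟨?_, k, hk⟩⟩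
    exact hk ▸ (mapsTo_g hn).iterate k hi
  rw [horbit, ← range_comp]
  exact congrArg range (funext (natCast_iterate_g hn hi))

end

open Classical in
theorem stmt_5 (p' q' n : ℕ) (hp : 1 ≤ p') (hq : 1 ≤ q') (hn : p' + q' - 1 = n)
    (l : ℕ) (hl : l = Nat.gcd p' q') (i : ℕ) (hi : i < n)
    (O : Set ℕ) (hO : O = {j | j < n ∧ ∃ k : ℕ, (g p' q')^[k] i = j}) :
    O.ncard ≥ (n + 1) / l - (if q' - 1 ∈ O then 1 else 0) := by
  have hN : p' + q' = n + 1 := by omega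
  have himage := hO ▸ natCast_image_orbit_g hN hi
  set f : ZMod (n + 1) → ZMod (n + 1) := (· + (p' : ZMod (n + 1)))
  have hinj : InjOn (Nat.cast : ℕ → ZMod (n + 1)) (Iio (n + 1)) := CharP.natCast_injOn_Iio _ _
  have hO_lt : O ⊆ Iio (n + 1) := hO ▸ fun j hj => Nat.lt_succ_of_lt hj.1
  have hperiod : minimalPeriod f i = (n + 1) / l := by
    rw [minimalPeriod_add_right, ZMod.addOrderOf_coe _ (by omega : n + 1 ≠ 0), ← hN,
      Nat.gcd_self_add_left, Nat.gcd_comm, hl]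
  have hfc : f (-1) ≠ -1 := by
    rw [Ne, add_eq_left, ← Nat.cast_zero]
    exact fun h => (by omega : p' ≠ 0) (hinj (by simp; omega) (by simp) h)
  have hb : f (q' - 1 : ℕ) = -1 := by
    simp only [f, ← Nat.cast_add, show q' - 1 + p' = n by omega, ZMod.natCast_self_eq_neg_one]
  have hmem : q' - 1 ∈ O ↔ ((q' - 1 : ℕ) : ZMod (n + 1)) ∈ Nat.cast '' O :=
    (hinj.mem_image_iff hO_lt (by simp; omega)).symm
  rw [himage] at hmem
  rw [ge_iff_le, ← (hinj.mono hO_lt).ncard_image, ← hperiod, himage]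
  split_ifs with h
  · have := minimalPeriod_le_ncard_orbit_firstReturn_add_one hfc (ZMod.natCast_ne_neg_one hi)
    omega
  · exact minimalPeriod_le_ncard_orbit_firstReturn (add_left_injective _) hfc
      (ZMod.natCast_ne_neg_one hi) hb (hmem.not.1 h)
end

section
/- The orbits of the permutation g on [0,n-1] are exactly the congruence classes modulo λ = gcd(p',q'); in particular, g has exactly λ orbits. -/
open Function Set

section FirstReturn

variable {α : Type*} [DecidableEq α] {r f : α → α} {s : Set α} {z : α}

theorem exists_iterate_eq_of_skip (hs : MapsTo r s s) (hz : r z ≠ z)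
    (hf : ∀ y ∈ s, f y = if r y = z then r (r y) else r y) {x : α} (hx : x ∈ s)
    (hxz : x ≠ z) (t : ℕ) (ht : r^[t] x ≠ z) : ∃ k, f^[k] x = r^[t] x := by
  induction t using Nat.strong_induction_on with
  | _ t ih =>
    rcases t with _ | t
    · exact ⟨0, rfl⟩
    rw [iterate_succ_apply'] at ht ⊢
    have hf_iter : ∀ u, f (r^[u] x) = if r^[u + 1] x = z then r^[u + 2] x else r^[u + 1] x :=
      fun u => by simpa only [iterate_succ_apply'] using hf _ (hs.iterate u hx)
    by_cases hzt : r^[t] x = z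
    · obtain _ | u := t
      · exact absurd hzt hxz
      have hu : r^[u] x ≠ z := fun h => hz (by rwa [iterate_succ_apply', h] at hzt)
      obtain ⟨k, hk⟩ := ih u (by omega) hu
      refine ⟨k + 1, ?_⟩
      rw [iterate_succ_apply', hk, hf_iter, if_pos hzt, iterate_succ_apply']
    · obtain ⟨k, hk⟩ := ih t (by omega) hzt
      refine ⟨k + 1, ?_⟩
      rw [iterate_succ_apply', hk, hf_iter, if_neg (by rwa [iterate_succ_apply']),
        iterate_succ_apply']

end FirstReturn

def addMod (m a x : ℕ) : ℕ := (x + a) % m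

theorem addMod_iterate {m a x : ℕ} (hx : x < m) (t : ℕ) :
    (addMod m a)^[t] x = (x + t * a) % m := by
  induction t with
  | zero => simp [Nat.mod_eq_of_lt hx]
  | succ t ih => rw [iterate_succ_apply', ih, addMod, Nat.mod_add_mod, add_one_mul, add_assoc]

theorem addMod_mod_gcd (m a x : ℕ) : addMod m a x % Nat.gcd a m = x % Nat.gcd a m := by
  obtain ⟨c, hc⟩ := Nat.gcd_dvd_left a m
  rw [addMod, Nat.mod_mod_of_dvd _ (Nat.gcd_dvd_right a m)]
  nth_rw 1 [hc]
  exact Nat.add_mul_mod_self_left _ _ _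

theorem exists_add_mul_mod_eq {a m i j : ℕ} (ha : Nat.gcd a m < m) (hi : i < m) (hj : j < m)
    (hij : j % Nat.gcd a m = i % Nat.gcd a m) : ∃ t, (i + t * a) % m = j := by
  obtain ⟨c, -, hc⟩ := Nat.exists_mul_mod_eq_gcd ha
  -- `j + (m - i)` is a multiple of the gcd, and `a * c` acts as the gcd modulo `m`
  obtain ⟨e, he⟩ : Nat.gcd a m ∣ j + (m - i) := by
    have hm : m ≡ 0 [MOD Nat.gcd a m] := Nat.modEq_zero_iff_dvd.mpr (Nat.gcd_dvd_right a m)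
    have : j + (m - i) + i ≡ 0 + i [MOD Nat.gcd a m] := by
      rw [zero_add, show j + (m - i) + i = j + m by omega]
      simpa using Nat.ModEq.add (show j ≡ i [MOD _] from hij) hm
    exact Nat.modEq_zero_iff_dvd.mp (Nat.ModEq.add_right_cancel' i this)
  refine ⟨c * e, ?_⟩
  calc (i + c * e * a) % m = (i + a * c % m * e) % m :=
        Nat.ModEq.add_left i <| by
          rw [show c * e * a = a * c * e by ring]
          exact ((Nat.mod_modEq (a * c) m).mul_right e).symm
    _ = (j + m) % m := by rw [hc, ← he]; congr 1; omega
    _ = j := by rw [Nat.add_mod_right, Nat.mod_eq_of_lt hj]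

section Rotation

variable {p' q' : ℕ}

theorem addMod_sub_one (hp : 1 ≤ p') : addMod (p' + q') p' (p' + q' - 1) = p' - 1 := by
  rw [addMod, show p' + q' - 1 + p' = p' - 1 + (p' + q') by omega, Nat.add_mod_right,
    Nat.mod_eq_of_lt (by omega)]

theorem g_eq_ite (hp : 1 ≤ p') (hq : 1 ≤ q') {x : ℕ} (hx : x < p' + q') :
    g p' q' x = if addMod (p' + q') p' x = p' + q' - 1
      then addMod (p' + q') p' (addMod (p' + q') p' x) else addMod (p' + q') p' x := by
  unfold g
  rcases lt_trichotomy (x + 1) q' with h | h | h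
  · have hrot : addMod (p' + q') p' x = x + p' := Nat.mod_eq_of_lt (by omega)
    rw [if_pos h, hrot, if_neg (by omega)]
  · have hrot : addMod (p' + q') p' x = p' + q' - 1 := by
      rw [addMod, Nat.mod_eq_of_lt (by omega)]; omega
    rw [if_neg (by omega), if_pos h, hrot, if_pos rfl, addMod_sub_one hp]
  · have hrot : addMod (p' + q') p' x = x - q' := by
      rw [addMod, show x + p' = x - q' + (p' + q') by omega, Nat.add_mod_right,
        Nat.mod_eq_of_lt (by omega)]
    rw [if_neg (by omega), if_neg (by omega), hrot, if_neg (by omega)]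

theorem mapsTo_g_residueClass (hp : 1 ≤ p') (hq : 1 ≤ q') (r : ℕ) :
    MapsTo (g p' q') {j | j < p' + q' - 1 ∧ j % Nat.gcd p' q' = r}
      {j | j < p' + q' - 1 ∧ j % Nat.gcd p' q' = r} := by
  rintro x ⟨hx, rfl⟩
  refine ⟨by unfold g; split_ifs <;> omega, ?_⟩
  rw [g_eq_ite hp hq (by omega), ← Nat.gcd_self_add_right]
  split_ifs <;> simp only [addMod_mod_gcd]

theorem setOf_iterate_g_eq (hp : 1 ≤ p') (hq : 1 ≤ q') {i : ℕ} (hi : i < p' + q' - 1) :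
    {j | j < p' + q' - 1 ∧ ∃ k : ℕ, (g p' q')^[k] i = j}
      = {j | j < p' + q' - 1 ∧ j % Nat.gcd p' q' = i % Nat.gcd p' q'} := by
  ext j
  constructor
  · rintro ⟨-, k, rfl⟩
    exact (mapsTo_g_residueClass hp hq _).iterate k ⟨hi, rfl⟩
  · rintro ⟨hj, hij⟩
    refine ⟨hj, ?_⟩
    have hgcd : Nat.gcd p' (p' + q') < p' + q' :=
      (Nat.le_of_dvd (by omega) (Nat.gcd_dvd_left _ _)).trans_lt (by omega)
    obtain ⟨t, ht⟩ := exists_add_mul_mod_eq (i := i) (j := j) hgcd (by omega) (by omega)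
      (by rwa [Nat.gcd_self_add_right])
    rw [← addMod_iterate (by omega)] at ht
    obtain ⟨k, hk⟩ := exists_iterate_eq_of_skip (r := addMod (p' + q') p') (f := g p' q')
      (s := Iio (p' + q')) (z := p' + q' - 1) (x := i)
      (fun x _ => Nat.mod_lt _ (by omega)) (by rw [addMod_sub_one hp]; omega)
      (fun x hx => g_eq_ite hp hq hx) (by simp only [mem_Iio]; omega) (by omega) t
      (by rw [ht]; omega)
    exact ⟨k, hk.trans ht⟩

end Rotation

theorem ncard_setOf_residueClasses {n l : ℕ} (hl : 0 < l) (hln : l ≤ n) :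
    {S : Set ℕ | ∃ i < n, S = {j | j < n ∧ j % l = i % l}}.ncard = l := by
  have himage : {S : Set ℕ | ∃ i < n, S = {j | j < n ∧ j % l = i % l}}
      = (fun r => {j | j < n ∧ j % l = r}) '' Iio l := by
    ext S
    constructor
    · rintro ⟨i, -, rfl⟩
      exact ⟨i % l, Nat.mod_lt _ hl, rfl⟩
    · rintro ⟨r, hr, rfl⟩
      exact ⟨r, by rw [mem_Iio] at hr; omega, by rw [Nat.mod_eq_of_lt hr]⟩
  rw [himage, InjOn.ncard_image, ← Finset.coe_Iio, ncard_coe_finset, Nat.card_Iio]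
  intro r hr r' _ h
  have hmem : r ∈ (fun r => {j | j < n ∧ j % l = r}) r :=
    ⟨by rw [mem_Iio] at hr; omega, Nat.mod_eq_of_lt hr⟩
  rw [h] at hmem
  exact (Nat.mod_eq_of_lt hr).symm.trans hmem.2

theorem stmt_6 (p' q' n : ℕ) (hp : 1 ≤ p') (hq : 1 ≤ q') (hn : p' + q' - 1 = n)
    (l : ℕ) (hl : l = Nat.gcd p' q') :
    (∀ i < n, {j | j < n ∧ ∃ k : ℕ, (g p' q')^[k] i = j}
        = {j | j < n ∧ j % l = i % l}) ∧
    {S : Set ℕ | ∃ i < n, S = {j | j < n ∧ ∃ k : ℕ, (g p' q')^[k] i = j}}.ncard = l := by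
  subst hn hl
  have hl_pos : 0 < Nat.gcd p' q' := Nat.gcd_pos_of_pos_left _ hp
  have hl_le : Nat.gcd p' q' ≤ p' + q' - 1 :=
    (Nat.le_of_dvd hp (Nat.gcd_dvd_left _ _)).trans (by omega)
  refine ⟨fun i hi => setOf_iterate_g_eq hp hq hi, ?_⟩
  rw [← ncard_setOf_residueClasses hl_pos hl_le]
  congr 1
  ext S
  exact exists_congr fun i => and_congr_right fun hi => by rw [setOf_iterate_g_eq hp hq hi]
end

section
/- The permutation g on [0,n-1] is a single n-cycle (i.e., cyclic, with one orbit) if and only if gcd(p', n+1) = 1. -/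
-- g preserves residues mod any common divisor d of p' and q'
lemma gmod (p' q' d : ℕ) (hp : 1 ≤ p') (hq : 1 ≤ q')
    (hdp : d ∣ p') (hdq : d ∣ q') (x : ℕ) : g p' q' x ≡ x [MOD d] := by
  unfold g
  split_ifs with h1 h2
  · exact ((Nat.modEq_iff_dvd' (Nat.le_add_right x p')).mpr
      (by simpa using hdp)).symm
  · -- x = q' - 1, value p' - 1
    have hd : d ∣ q' - p' := Nat.dvd_sub hdq hdp
    have hd' : d ∣ p' - q' := Nat.dvd_sub hdp hdq
    rcases le_total p' q' with h | h
    · refine (Nat.modEq_iff_dvd' (by omega)).mpr ?_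
      have : x - (p' - 1) = q' - p' := by omega
      rw [this]; exact hd
    · refine ((Nat.modEq_iff_dvd' (by omega)).mpr ?_).symm
      have : p' - 1 - x = p' - q' := by omega
      rw [this]; exact hd'
  · refine (Nat.modEq_iff_dvd' (Nat.sub_le x q')).mpr ?_
    rcases Nat.lt_or_ge x q' with h | h
    · have : x - (x - q') = x := by omega
      rw [this]
      -- x < q' and x + 1 ≠ q' and ¬ x + 1 < q' impossible
      omega
    · have : x - (x - q') = q' := by omega
      rw [this]; exact hdq

lemma gmod_iter (p' q' d : ℕ) (hp : 1 ≤ p') (hq : 1 ≤ q')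
    (hdp : d ∣ p') (hdq : d ∣ q') (x k : ℕ) :
    (g p' q')^[k] x ≡ x [MOD d] := by
  induction k with
  | zero => rfl
  | succ k ih =>
      rw [Function.iterate_succ_apply']
      exact (gmod p' q' d hp hq hdp hdq _).trans ih

-- description of g on [0, n-1] via mod (n+1)
lemma gval (p' q' n : ℕ) (hp : 1 ≤ p') (hq : 1 ≤ q') (hn : p' + q' - 1 = n)
    (v : ℕ) (hv : v < n) :
    g p' q' v = if (v + p') % (n + 1) = n then p' - 1 else (v + p') % (n + 1) := by
  unfold g
  split_ifs with h1 h2 h3 h4 h5 h6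
  · exfalso; rw [Nat.mod_eq_of_lt (by omega)] at h2; omega
  · -- v + 1 < q' but (v+p') % (n+1) ≠ n; value v + p'
    rw [Nat.mod_eq_of_lt (by omega)]
  · rfl
  · -- v + 1 = q', claim (v+p') % (n+1) = n, contradiction with h4
    exfalso
    rw [Nat.mod_eq_of_lt (by omega)] at h4
    omega
  · -- v ≥ q', claim (v+p') % (n+1) = v - q' ≠ n, contradiction with h5
    exfalso
    rw [Nat.mod_eq_sub_mod (by omega), Nat.mod_eq_of_lt (by omega)] at h5
    omega
  · rw [Nat.mod_eq_sub_mod (by omega), Nat.mod_eq_of_lt (by omega)]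
    omega

lemma gkey (p' q' n : ℕ) (hp : 1 ≤ p') (hq : 1 ≤ q') (hn : p' + q' - 1 = n)
    (i : ℕ) (hi : i < n) (m : ℕ) :
    ∃ k, (g p' q')^[k] i =
      if (i + m * p') % (n + 1) = n then p' - 1 else (i + m * p') % (n + 1) := by
  have hn1 : 1 ≤ n := by omega
  have hpn : p' ≤ n := by omega
  induction m with
  | zero =>
      refine ⟨0, ?_⟩
      simp only [Nat.mul_zero, Nat.zero_mul, Nat.add_zero]
      rw [Nat.mod_eq_of_lt (by omega)]
      simp [Nat.ne_of_lt hi]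
  | succ m ih =>
      obtain ⟨k, hk⟩ := ih
      set v := (i + m * p') % (n + 1) with hv
      have hvlt : v < n + 1 := Nat.mod_lt _ (by omega)
      have hstep : (i + (m + 1) * p') % (n + 1) = (v + p') % (n + 1) := by
        conv_lhs => rw [show i + (m + 1) * p' = (i + m * p') + p' by ring]
        rw [Nat.add_mod, ← hv, Nat.mod_eq_of_lt (show p' < n + 1 by omega)]
      by_cases hvn : v = n
      · -- w = p' - 1 and next value is also p' - 1
        refine ⟨k, ?_⟩
        rw [hstep, hvn]
        have : (n + p') % (n + 1) = p' - 1 := by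
          rw [Nat.mod_eq_sub_mod (by omega), Nat.mod_eq_of_lt (by omega)]
          omega
        rw [this]
        simp only [hvn, if_pos rfl] at hk
        have : p' - 1 ≠ n := by omega
        rw [if_neg this]
        exact hk
      · refine ⟨k + 1, ?_⟩
        rw [Function.iterate_succ_apply']
        simp only [if_neg hvn] at hk
        rw [hk, hstep]
        exact gval p' q' n hp hq hn v (by omega)

theorem stmt_7 (p' q' n : ℕ) (hp : 1 ≤ p') (hq : 1 ≤ q') (hn : p' + q' - 1 = n) :
    (∀ i < n, ∀ j < n, ∃ k : ℕ, (g p' q')^[k] i = j) ↔ Nat.gcd p' (n + 1) = 1 := by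
  have hn1 : 1 ≤ n := by omega
  constructor
  · intro h
    by_contra hg
    set d := Nat.gcd p' (n + 1) with hd
    have hdp : d ∣ p' := Nat.gcd_dvd_left _ _
    have hdn : d ∣ n + 1 := Nat.gcd_dvd_right _ _
    have hd1 : 2 ≤ d := by
      rcases Nat.lt_or_ge d 2 with h2 | h2
      · interval_cases d
        · omega
        · exact absurd rfl hg
      · exact h2
    have hdq : d ∣ q' := by
      have : q' = (n + 1) - p' := by omega
      rw [this]; exact Nat.dvd_sub hdn hdp
    have hpd : d ≤ p' := Nat.le_of_dvd (by omega) hdp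
    have hqd : d ≤ q' := Nat.le_of_dvd (by omega) hdq
    have hn3 : 3 ≤ n := by omega
    obtain ⟨k, hk⟩ := h 0 (by omega) 1 (by omega)
    have := gmod_iter p' q' d hp hq hdp hdq 0 k
    rw [hk] at this
    have h01 : 1 % d = 0 % d := this
    rw [Nat.zero_mod, Nat.mod_eq_of_lt (by omega)] at h01
    omega
  · intro hg i hi j hj
    have hcop : Nat.Coprime p' (n + 1) := hg
    haveI : NeZero (n + 1) := ⟨Nat.succ_ne_zero n⟩
    -- find m with (i + m * p') % (n + 1) = j
    set c : ZMod (n + 1) := ((j : ZMod (n + 1)) - (i : ZMod (n + 1))) * (p' : ZMod (n + 1))⁻¹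
      with hc
    obtain ⟨k, hk⟩ := gkey p' q' n hp hq hn i hi c.val
    have hinv : (p' : ZMod (n + 1)) * (p' : ZMod (n + 1))⁻¹ = 1 :=
      ZMod.coe_mul_inv_eq_one p' hcop
    have hcast : ((i + c.val * p' : ℕ) : ZMod (n + 1)) = (j : ZMod (n + 1)) := by
      push_cast
      rw [ZMod.natCast_val, ZMod.cast_id, hc]
      have h : ∀ a : ZMod (n + 1), a * (p' : ZMod (n + 1))⁻¹ * (p' : ZMod (n + 1)) = a := by
        intro a
        rw [mul_assoc, mul_comm ((p' : ZMod (n + 1))⁻¹), hinv, mul_one]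
      ring_nf
      rw [h, h]
      ring
    have hmod : (i + c.val * p') % (n + 1) = j := by
      have h1 : ((i + c.val * p' : ℕ) : ZMod (n + 1)).val = (i + c.val * p') % (n + 1) :=
        ZMod.val_natCast _ _
      have h2 : ((j : ℕ) : ZMod (n + 1)).val = j := ZMod.val_natCast_of_lt (by omega)
      rw [← h1, hcast, h2]
    rw [hmod] at hk
    rw [if_neg (by omega)] at hk
    exact ⟨k, hk⟩
end

section
/- In the digraph H(p,q,d) with d dividing both p and q, the out-neighbors of the vertex corresponding to the interval [di, di+d-1], where i = (t,s) in mixed-radix coordinates with i = t·(q/d)+s, 0≤t<p, 0≤s<q/d, are the d distinct vertices indexed by (q-1-(ds+r))·(p/d) + ⌊(p-1-t)/d⌋ for r = 0,...,d-1; in particular they are pairwise distinct. -/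
/-- The OTIS transpose map: for a = iq+j (0 ≤ i < p, 0 ≤ j < q), tau a = (q-1-j)p + (p-1-i). -/
def tau (p q a : ℕ) : ℕ := (q - 1 - a % q) * p + (p - 1 - a / q)

/-- Arc multiplicity from vertex u to vertex v in H(p,q,d). -/
def mult (p q d u v : ℕ) : ℕ :=
  ((Finset.range d).filter (fun r => tau p q (d * u + r) / d = v)).card

/-- There is an arc from u to v in H(p,q,d). -/
def arc (p q d u v : ℕ) : Prop := ∃ r < d, tau p q (d * u + r) / d = v

/-! Vertex `t * (q / d) + s` is the block of `d` consecutive points `(t, d * s + r)` of row `t`,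
which `tau` sends into column `p - 1 - t` of rows `q - 1 - (d * s + r)`; since `d ∣ p`, dividing
by `d` keeps these rows apart. -/

lemma tau_mul_add {p q i j : ℕ} (hj : j < q) :
    tau p q (q * i + j) = (q - 1 - j) * p + (p - 1 - i) := by
  have hq : 0 < q := Nat.zero_lt_of_lt hj
  rw [tau, Nat.mul_add_mod, Nat.mod_eq_of_lt hj, Nat.mul_add_div hq, Nat.div_eq_of_lt hj,
    Nat.add_zero]

lemma tau_mul_add_div {p q d i j : ℕ} (hdp : d ∣ p) (hj : j < q) :
    tau p q (q * i + j) / d = (q - 1 - j) * (p / d) + (p - 1 - i) / d := by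
  rw [tau_mul_add hj, Nat.add_div_of_dvd_right (Dvd.dvd.mul_left hdp _), Nat.mul_div_assoc _ hdp]

lemma mul_add_lt_of_lt_div {d q s r : ℕ} (hdq : d ∣ q) (hs : s < q / d) (hr : r < d) :
    d * s + r < q :=
  calc d * s + r < d * (s + 1) := by rw [Nat.mul_succ]; omega
    _ ≤ d * (q / d) := Nat.mul_le_mul_left d hs
    _ = q := Nat.mul_div_cancel' hdq

theorem stmt_9_general (p q d : ℕ) (hdp : d ∣ p) (hdq : d ∣ q)
    (t s : ℕ) (ht : t < p) (hs : s < q / d) (i : ℕ) (hi : i = t * (q / d) + s) :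
    (∀ r < d, tau p q (d * i + r) / d
        = (q - 1 - (d * s + r)) * (p / d) + (p - 1 - t) / d) ∧
    (∀ r < d, ∀ r' < d,
        tau p q (d * i + r) / d = tau p q (d * i + r') / d → r = r') := by
  have hblock : ∀ r, d * i + r = q * t + (d * s + r) := fun r => by
    rw [hi]
    conv_rhs => rw [← Nat.mul_div_cancel' hdq]
    ring
  have hcol : ∀ r < d, tau p q (d * i + r) / d
      = (q - 1 - (d * s + r)) * (p / d) + (p - 1 - t) / d := fun r hr => by
    rw [hblock, tau_mul_add_div hdp (mul_add_lt_of_lt_div hdq hs hr)]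
  refine ⟨hcol, fun r hr r' hr' h => ?_⟩
  have hpd : 0 < p / d := Nat.div_pos (Nat.le_of_dvd (by omega) hdp) (Nat.zero_lt_of_lt hr)
  rw [hcol r hr, hcol r' hr'] at h
  have hrow := Nat.eq_of_mul_eq_mul_right hpd (Nat.add_right_cancel h)
  have := mul_add_lt_of_lt_div hdq hs hr
  have := mul_add_lt_of_lt_div hdq hs hr'
  omega

theorem stmt_9 (p q d : ℕ) (hd : 0 < d) (hdp : d ∣ p) (hdq : d ∣ q)
    (t s : ℕ) (ht : t < p) (hs : s < q / d) (i : ℕ) (hi : i = t * (q / d) + s) :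
    (∀ r < d, tau p q (d * i + r) / d
        = (q - 1 - (d * s + r)) * (p / d) + (p - 1 - t) / d) ∧
    (∀ r < d, ∀ r' < d,
        tau p q (d * i + r) / d = tau p q (d * i + r') / d → r = r') :=
  stmt_9_general p q d hdp hdq t s ht hs i hi
end

section
/- If d divides both p and q, then in H(p,q,d) any two vertices either have identical out-neighbor sets or disjoint out-neighbor sets; specifically, vertices with coordinates (t,s) and (t',s') (where vertex index i = t·(q/d)+s) have the same out-neighbor set if and only if s=s' and ⌊(p-1-t)/d⌋ = ⌊(p-1-t')/d⌋. -/
/-!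
Write the vertex `u = t * (q / d) + s` and a point `d * u + r` (`r < d`) of its interval as
`t * q + (d * s + r)`. Then `tau (d * u + r) / d = (q - 1 - d * s - r) * (p / d) + (p - 1 - t) / d`,
and as `r` runs over `[0, d)` the factor `q - 1 - d * s - r` runs over exactly the numbers whose
quotient by `d` is `q / d - 1 - s`. So the out-neighbourhood of `u` is the fibre of
`v ↦ (v % (p / d), v / (p / d) / d)` over `((p - 1 - t) / d, q / d - 1 - s)`; fibres of a map are
equal or disjoint, and a nonempty fibre determines its point.
-/

theorem Set.preimage_singleton_eq_or_disjoint {α β : Type*} (f : α → β) (a b : β) :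
    f ⁻¹' {a} = f ⁻¹' {b} ∨ Disjoint (f ⁻¹' {a}) (f ⁻¹' {b}) := by
  obtain rfl | hab := eq_or_ne a b
  · exact Or.inl rfl
  · exact Or.inr (Disjoint.preimage f (Set.disjoint_singleton.2 hab))

theorem Set.preimage_singleton_eq_iff {α β : Type*} {f : α → β} {a b : β}
    (ha : (f ⁻¹' {a}).Nonempty) : f ⁻¹' {a} = f ⁻¹' {b} ↔ a = b := by
  refine ⟨fun h => ?_, fun h => h ▸ rfl⟩
  obtain ⟨x, hx⟩ := ha
  exact (hx : f x = a).symm.trans (h ▸ hx : x ∈ f ⁻¹' {b})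

theorem tau_add_mul {p q i j : ℕ} (hj : j < q) :
    tau p q (j + i * q) = (q - 1 - j) * p + (p - 1 - i) := by
  simp only [tau, Nat.add_mul_mod_self_right, Nat.mod_eq_of_lt hj,
    Nat.add_mul_div_right _ _ (Nat.zero_lt_of_lt hj), Nat.div_eq_of_lt hj, zero_add]

theorem tau_add_mul_div {p q d i j : ℕ} (hd : 0 < d) (hdp : d ∣ p) (hj : j < q) :
    tau p q (j + i * q) / d = (q - 1 - j) * (p / d) + (p - 1 - i) / d := by
  obtain ⟨m, rfl⟩ := hdp
  rw [tau_add_mul hj, Nat.mul_div_cancel_left m hd, mul_left_comm, Nat.mul_add_div hd]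

theorem exists_eq_sub_iff_div_eq {d n s e : ℕ} (hd : 0 < d) (hs : s < n) :
    (∃ r < d, e = d * n - 1 - (d * s + r)) ↔ e / d = n - 1 - s := by
  obtain ⟨k, rfl⟩ := Nat.exists_eq_add_of_lt hs
  have hdn : d * (s + k + 1) = d * s + d * k + d := by ring
  rw [Nat.div_eq_iff hd, show s + k + 1 - 1 - s = k by omega, hdn, mul_comm k d]
  constructor
  · rintro ⟨r, hr, rfl⟩
    omega
  · rintro ⟨hle, hlt⟩
    exact ⟨d * s + d * k + d - 1 - d * s - e, by omega, by omega⟩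

theorem arc_iff {p q d t s v : ℕ} (hd : 0 < d) (hp : 0 < p) (hdp : d ∣ p) (hdq : d ∣ q)
    (hs : s < q / d) :
    arc p q d (t * (q / d) + s) v ↔
      v % (p / d) = (p - 1 - t) / d ∧ v / (p / d) / d = q / d - 1 - s := by
  obtain ⟨n, rfl⟩ := hdq
  rw [Nat.mul_div_cancel_left n hd] at hs ⊢
  have hm : 0 < p / d := Nat.div_pos (Nat.le_of_dvd hp hdp) hd
  have hc : (p - 1 - t) / d < p / d := Nat.div_lt_div_of_lt_of_dvd hdp (by omega)
  have hj : ∀ r < d, d * s + r < d * n := fun r hr => by nlinarith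
  calc arc p (d * n) d (t * n + s) v
      ↔ ∃ r < d, v = (d * n - 1 - (d * s + r)) * (p / d) + (p - 1 - t) / d := by
        unfold arc
        refine exists_congr fun r => and_congr_right fun hr => ?_
        rw [show d * (t * n + s) + r = (d * s + r) + t * (d * n) by ring,
          tau_add_mul_div hd hdp (hj r hr), eq_comm]
    _ ↔ v % (p / d) = (p - 1 - t) / d ∧ ∃ r < d, v / (p / d) = d * n - 1 - (d * s + r) := by
        have hdivmod : ∀ e, v = e * (p / d) + (p - 1 - t) / d ↔
            v / (p / d) = e ∧ v % (p / d) = (p - 1 - t) / d := by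
          intro e
          rw [Nat.div_mod_unique hm, add_comm, mul_comm, eq_comm, and_iff_left hc]
        simp only [hdivmod]
        exact ⟨fun ⟨r, hr, hdiv, hmod⟩ => ⟨hmod, r, hr, hdiv⟩,
          fun ⟨hmod, r, hr, hdiv⟩ => ⟨r, hr, hdiv, hmod⟩⟩
    _ ↔ _ := by rw [exists_eq_sub_iff_div_eq hd hs]

theorem setOf_arc_eq_preimage {p q d t s : ℕ} (hd : 0 < d) (hp : 0 < p) (hdp : d ∣ p)
    (hdq : d ∣ q) (hs : s < q / d) :
    {v | arc p q d (t * (q / d) + s) v}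
      = (fun v => (v % (p / d), v / (p / d) / d)) ⁻¹' {((p - 1 - t) / d, q / d - 1 - s)} := by
  ext v
  simp only [Set.mem_ofPred_eq, Set.mem_preimage, Set.mem_singleton_iff, Prod.mk.injEq,
    arc_iff hd hp hdp hdq hs]

theorem stmt_10_general (p q d : ℕ) (hd : 0 < d) (hdp : d ∣ p) (hdq : d ∣ q)
    (t s t' s' : ℕ) (ht : t < p) (hs : s < q / d) (hs' : s' < q / d)
    (u u' : ℕ) (hu : u = t * (q / d) + s) (hu' : u' = t' * (q / d) + s') :
    ({v | arc p q d u v} = {v | arc p q d u' v}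
        ↔ s = s' ∧ (p - 1 - t) / d = (p - 1 - t') / d) ∧
    ({v | arc p q d u v} = {v | arc p q d u' v}
        ∨ Disjoint {v | arc p q d u v} {v | arc p q d u' v}) := by
  have hp : 0 < p := by omega
  have hne : {v | arc p q d u v}.Nonempty := ⟨_, 0, hd, rfl⟩
  rw [hu, setOf_arc_eq_preimage hd hp hdp hdq hs] at hne ⊢
  rw [hu', setOf_arc_eq_preimage hd hp hdp hdq hs']
  refine ⟨?_, Set.preimage_singleton_eq_or_disjoint _ _ _⟩
  rw [Set.preimage_singleton_eq_iff hne, Prod.mk.injEq, and_comm]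
  exact and_congr_left' (by omega)

theorem stmt_10 (p q d : ℕ) (hd : 0 < d) (hdp : d ∣ p) (hdq : d ∣ q)
    (t s t' s' : ℕ) (ht : t < p) (hs : s < q / d) (ht' : t' < p) (hs' : s' < q / d)
    (u u' : ℕ) (hu : u = t * (q / d) + s) (hu' : u' = t' * (q / d) + s') :
    ({v | arc p q d u v} = {v | arc p q d u' v}
        ↔ s = s' ∧ (p - 1 - t) / d = (p - 1 - t') / d) ∧
    ({v | arc p q d u v} = {v | arc p q d u' v}
        ∨ Disjoint {v | arc p q d u v} {v | arc p q d u' v}) :=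
  stmt_10_general p q d hd hdp hdq t s t' s' ht hs hs' u u' hu hu'
end

section
/- If the digraph H(p,q,d) has no multiple arcs, then d ≤ min(p,q). -/
lemma Nat.div_eq_div_sub_one_of_dvd {d N x : ℕ} (hdN : d ∣ N) (hlo : N - d ≤ x) (hhi : x < N) :
    x / d = N / d - 1 := by
  obtain ⟨m, rfl⟩ := hdN
  have hd : 0 < d := Nat.pos_of_ne_zero (by rintro rfl; simp at hhi)
  have hm : 0 < m := Nat.pos_of_ne_zero (by rintro rfl; simp at hhi)
  rw [Nat.mul_div_cancel_left _ hd]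
  refine Nat.div_eq_of_lt_le ?_ ?_
  · rw [Nat.sub_mul, one_mul, mul_comm]; exact hlo
  · rwa [Nat.sub_add_cancel hm, mul_comm]

section tau

variable {p q : ℕ}

lemma tau_zero (hp : 0 < p) (hq : 0 < q) : tau p q 0 = p * q - 1 := by
  have : p ≤ p * q := Nat.le_mul_of_pos_right p hq
  simp only [tau, Nat.zero_mod, Nat.zero_div, Nat.sub_zero, Nat.sub_mul, one_mul]
  rw [mul_comm q p]
  omega

lemma tau_one (hp : 0 < p) (hq : 1 < q) : tau p q 1 = p * q - p - 1 := by
  have : p * 2 ≤ p * q := Nat.mul_le_mul_left p hq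
  simp only [tau, Nat.mod_eq_of_lt hq, Nat.div_eq_of_lt hq, Nat.sub_zero, Nat.sub_mul, one_mul]
  rw [mul_comm q p]
  omega

lemma tau_self (hp : 1 < p) (hq : 0 < q) : tau p q q = p * q - 2 := by
  have : p ≤ p * q := Nat.le_mul_of_pos_right p hq
  simp only [tau, Nat.mod_self, Nat.div_self hq, Nat.sub_zero, Nat.sub_mul, one_mul]
  rw [mul_comm q p]
  omega

end tau

lemma one_lt_mult_of_ne {p q d u v r s : ℕ} (hr : r < d) (hs : s < d) (hrs : r ≠ s)
    (hrv : tau p q (d * u + r) / d = v) (hsv : tau p q (d * u + s) / d = v) :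
    1 < mult p q d u v :=
  Finset.one_lt_card.mpr
    ⟨r, Finset.mem_filter.mpr ⟨Finset.mem_range.mpr hr, hrv⟩,
     s, Finset.mem_filter.mpr ⟨Finset.mem_range.mpr hs, hsv⟩, hrs⟩

theorem stmt_12_general (p q d : ℕ) (hp : 1 < p) (hq : 1 < q) (hdiv : d ∣ p * q)
    (hnomult : ∀ u < p * q / d, ∀ v : ℕ, mult p q d u v ≤ 1) :
    d ≤ min p q := by
  by_contra! hlt
  have hpq : 0 < p * q := by positivity
  have hd : 0 < d := by omega
  have hlast : ∀ x, p * q - d ≤ x → x < p * q → x / d = p * q / d - 1 :=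
    fun x => Nat.div_eq_div_sub_one_of_dvd hdiv
  obtain ⟨r, hr0, hrd, hr⟩ : ∃ r, r ≠ 0 ∧ r < d ∧ tau p q r / d = p * q / d - 1 := by
    rcases min_lt_iff.mp hlt with hpd | hqd
    · refine ⟨1, one_ne_zero, by omega, hlast _ ?_ ?_⟩ <;> rw [tau_one (by omega) hq] <;> omega
    · refine ⟨q, by omega, hqd, hlast _ ?_ ?_⟩ <;> rw [tau_self hp (by omega)] <;> omega
  have h0 : tau p q 0 / d = p * q / d - 1 := by
    have := tau_zero (p := p) (q := q) (by omega) (by omega)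
    exact hlast _ (by omega) (by omega)
  have hu : 0 < p * q / d := Nat.div_pos (Nat.le_of_dvd hpq hdiv) hd
  refine (hnomult 0 hu (p * q / d - 1)).not_gt (one_lt_mult_of_ne hd hrd hr0.symm ?_ ?_)
  · simpa using h0
  · simpa using hr

theorem stmt_12 (p q d : ℕ) (hp : 1 < p) (hq : 1 < q) (hd : 1 < d) (hdiv : d ∣ p * q)
    (hnomult : ∀ u < p * q / d, ∀ v : ℕ, mult p q d u v ≤ 1) :
    d ≤ min p q :=
  stmt_12_general p q d hp hq hdiv hnomult
end

section
/- If H(p,q,d) is a line digraph (equivalently, it has no multiple arcs and the relation of sharing a common out-neighbor is an equivalence relation on its vertices), then d divides gcd(p,q). -/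
namespace HDigraph

variable {p q d : ℕ}

lemma lt_add_of_div_eq {a b : ℕ} (hd : 0 < d) (h : a / d = b / d) : a < b + d := by
  have := Nat.lt_mul_div_succ a hd
  have := Nat.mul_div_le b d
  rw [h, mul_add_one] at *
  omega

lemma sub_div_eq_of_dvd {m k : ℕ} (hdiv : d ∣ m) (hk : 0 < k) (hkd : k ≤ d) :
    (m - k) / d = m / d - 1 := by
  obtain ⟨_ | n, rfl⟩ := hdiv
  · simp
  rw [Nat.mul_div_cancel_left _ (by omega), Nat.add_sub_cancel, mul_add_one]
  apply Nat.div_eq_of_lt_le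
  · rw [mul_comm]; omega
  · rw [add_one_mul, mul_comm]; omega

lemma tau_mul_add (p : ℕ) {i j : ℕ} (hj : j < q) :
    tau p q (i * q + j) = (q - 1 - j) * p + (p - 1 - i) := by
  have hq : 0 < q := by omega
  have hdiv : (i * q + j) / q = i := by
    rw [add_comm, Nat.add_mul_div_right _ _ hq, Nat.div_eq_of_lt hj, zero_add]
  have hmod : (i * q + j) % q = j := by
    rw [add_comm, Nat.add_mul_mod_self_right, Nat.mod_eq_of_lt hj]
  rw [tau, hdiv, hmod]

lemma tau_of_lt {j : ℕ} (hp : 0 < p) (hj : j < q) : tau p q j = (q - j) * p - 1 := by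
  have h := tau_mul_add p (i := 0) hj
  rw [zero_mul, zero_add] at h
  rw [h, show q - j = (q - 1 - j) + 1 by omega, add_one_mul]
  omega

lemma tau_self (hp : 1 < p) (hq : 0 < q) : tau p q q = q * p - 2 := by
  have h := tau_mul_add p (i := 1) (j := 0) hq
  rw [one_mul, add_zero] at h
  rw [h, show q * p = (q - 1 - 0) * p + p by
    rw [← add_one_mul]; congr 1; omega]
  omega

lemma tau_lt (hp : 0 < p) (hq : 0 < q) (a : ℕ) : tau p q a < q * p := by
  have hrow : (q - 1 - a % q) * p + p ≤ q * p := by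
    rw [← add_one_mul]; exact Nat.mul_le_mul_right p (by omega)
  have hcol : p - 1 - a / q < p := (Nat.sub_le _ _).trans_lt (Nat.sub_one_lt hp.ne')
  exact (Nat.add_lt_add_left hcol _).trans_le hrow

lemma tau_tau {b : ℕ} (hb : b < q * p) : tau p q (tau q p b) = b := by
  have hp : 0 < p := Nat.pos_of_ne_zero (by rintro rfl; simp at hb)
  have hq : 0 < q := Nat.pos_of_ne_zero (by rintro rfl; simp at hb)
  have hdiv : b / p ≤ q - 1 := Nat.le_sub_one_of_lt ((Nat.div_lt_iff_lt_mul hp).mpr hb)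
  have hmod : b % p ≤ p - 1 := Nat.le_sub_one_of_lt (Nat.mod_lt b hp)
  have hj : q - 1 - b / p < q := (Nat.sub_le _ _).trans_lt (Nat.sub_one_lt hq.ne')
  rw [show tau q p b = (p - 1 - b % p) * q + (q - 1 - b / p) from rfl, tau_mul_add p hj,
    Nat.sub_sub_self hdiv, Nat.sub_sub_self hmod]
  exact Nat.div_add_mod' b p

lemma arc_iff (hd : 0 < d) {u v : ℕ} : arc p q d u v ↔ ∃ a, a / d = u ∧ tau p q a / d = v := by
  constructor
  · rintro ⟨r, hr, h⟩
    refine ⟨d * u + r, ?_, h⟩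
    rw [Nat.mul_add_div hd, Nat.div_eq_of_lt hr, add_zero]
  · rintro ⟨a, rfl, h⟩
    exact ⟨a % d, Nat.mod_lt a hd, by rw [Nat.div_add_mod, h]⟩

lemma arc_swap (hd : 0 < d) {u v : ℕ} (hu : u < p * q / d) (h : arc p q d u v) :
    arc q p d v u := by
  obtain ⟨a, rfl, rfl⟩ := (arc_iff hd).mp h
  have ha : a < p * q := Nat.lt_of_div_lt_div hu
  exact (arc_iff hd).mpr ⟨tau p q a, rfl, by rw [tau_tau ha]⟩

/-- Element-level form of `mult ≤ 1`: distinct points of one interval go to distinct intervals. -/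
def NoMultipleArcs (p q d : ℕ) : Prop :=
  ∀ a < p * q, ∀ b < p * q, a / d = b / d → tau p q a / d = tau p q b / d → a = b

def HeuchenneCondition (p q d : ℕ) : Prop :=
  ∀ u v w x : ℕ, u < p * q / d → v < p * q / d → w < p * q / d →
    x < p * q / d → arc p q d u w → arc p q d v w → arc p q d v x → arc p q d u x

lemma noMultipleArcs_of_mult_le_one (hd : 0 < d) (hdiv : d ∣ p * q)
    (h : ∀ u < p * q / d, ∀ v : ℕ, mult p q d u v ≤ 1) : NoMultipleArcs p q d := by
  intro a ha b hb hab htau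
  suffices a % d = b % d by rw [← Nat.div_add_mod a d, ← Nat.div_add_mod b d, hab, this]
  by_contra hne
  have hcard : 1 < mult p q d (a / d) (tau p q a / d) := by
    refine Finset.one_lt_card.mpr ⟨a % d, ?_, b % d, ?_, hne⟩ <;>
      simp only [Finset.mem_filter, Finset.mem_range, Nat.mod_lt _ hd, true_and]
    · rw [Nat.div_add_mod]
    · rw [hab, Nat.div_add_mod, htau]
  exact absurd (h _ (Nat.div_lt_div_of_lt_of_dvd hdiv ha) _) (not_le.mpr hcard)

lemma NoMultipleArcs.swap (hp : 0 < p) (hq : 0 < q) (h : NoMultipleArcs p q d) :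
    NoMultipleArcs q p d := by
  intro a ha b hb hab htau
  have key := h _ (tau_lt hq hp a) _ (tau_lt hq hp b) htau
  rw [tau_tau ha, tau_tau hb] at key
  rw [← tau_tau ha, ← tau_tau hb, key hab]

lemma HeuchenneCondition.swap (hd : 0 < d) (h : HeuchenneCondition p q d) :
    HeuchenneCondition q p d := by
  intro u v w x hu hv hw hx huw hvw hvx
  rw [mul_comm q p] at hu hv hw hx
  exact arc_swap hd hx <| h x w v u hx hw hv hu
    (arc_swap hd (mul_comm p q ▸ hv) hvx) (arc_swap hd (mul_comm p q ▸ hv) hvw)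
    (arc_swap hd (mul_comm p q ▸ hu) huw)

lemma le_of_noMultipleArcs (hp : 1 < p) (hq : 0 < q) (hd : 1 < d) (hdiv : d ∣ p * q)
    (h : NoMultipleArcs p q d) : d ≤ q := by
  by_contra! hqd
  have hqpq : q < p * q := lt_mul_left hq hp
  have hdiv' : d ∣ q * p := mul_comm p q ▸ hdiv
  have := h 0 (by omega) q hqpq (by rw [Nat.zero_div, Nat.div_eq_of_lt hqd]) (by
    rw [tau_of_lt (by omega) hq, tau_self hp hq, Nat.sub_zero,
      sub_div_eq_of_dvd hdiv' one_pos hd.le, sub_div_eq_of_dvd hdiv' two_pos hd])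
  omega

lemma not_arc_zero (hd : 0 < d) (hdp : d ≤ p) {ρ : ℕ} (hρ : 0 < ρ) (hρq : ρ + d ≤ q) :
    ¬ arc p q d 0 ((ρ * p - 1) / d) := by
  rintro ⟨t, htd, htau⟩
  rw [mul_zero, zero_add, tau_of_lt (by omega) (by omega)] at htau
  have hclose := lt_add_of_div_eq hd htau
  have hfar : (ρ + 1) * p ≤ (q - t) * p := Nat.mul_le_mul_right p (by omega)
  have hρp : 0 < ρ * p := Nat.mul_pos hρ (by omega)
  rw [add_one_mul] at hfar
  omega

lemma dvd_of_heuchenneCondition (hd : 0 < d) (hdp : d ≤ p) (hdq : d ≤ q) (hdiv : d ∣ p * q)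
    (h : HeuchenneCondition p q d) : d ∣ q := by
  obtain ⟨V, ρ, hqV, hρd⟩ : ∃ V ρ, d * V + ρ = q ∧ ρ < d :=
    ⟨q / d, q % d, Nat.div_add_mod q d, Nat.mod_lt q hd⟩
  by_contra hndq
  have hρ : 0 < ρ := Nat.pos_of_ne_zero fun h0 => hndq ⟨V, by omega⟩
  have hdV : d ≤ d * V := Nat.le_mul_of_pos_right d (Nat.pos_of_ne_zero (by rintro rfl; omega))
  have hp : 0 < p := by omega
  have hq : 0 < q := by omega
  have hdiv' : d ∣ q * p := mul_comm p q ▸ hdiv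
  have vertex_lt : ∀ {a}, a < q * p → a / d < p * q / d := fun ha => by
    rw [mul_comm p q]; exact Nat.div_lt_div_of_lt_of_dvd hdiv' ha
  have hqp : q ≤ q * p := Nat.le_mul_of_pos_right q hp
  have hρq : ρ * p ≤ q * p := Nat.mul_le_mul_right p (by omega)
  have arc_zero_last : arc p q d 0 ((q * p - 1) / d) :=
    (arc_iff hd).mpr ⟨0, Nat.zero_div d, by rw [tau_of_lt hp hq, Nat.sub_zero]⟩
  have arc_V_last : arc p q d V ((q * p - 1) / d) := by
    refine (arc_iff hd).mpr ⟨q, ?_, ?_⟩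
    · rw [← hqV, Nat.mul_add_div hd, Nat.div_eq_of_lt hρd, add_zero]
    · rw [tau_self (by omega) hq, sub_div_eq_of_dvd hdiv' one_pos (by omega),
        sub_div_eq_of_dvd hdiv' two_pos (by omega)]
  have arc_V_ρ : arc p q d V ((ρ * p - 1) / d) := by
    refine (arc_iff hd).mpr ⟨d * V, Nat.mul_div_cancel_left V hd, ?_⟩
    rw [tau_of_lt hp (by omega), show q - d * V = ρ by omega]
  exact not_arc_zero hd hdp hρ (by omega) <|
    h 0 V _ _ (Nat.zero_div d ▸ vertex_lt (by omega))
      (Nat.mul_div_cancel_left V hd ▸ vertex_lt (by omega)) (vertex_lt (by omega))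
      (vertex_lt (by omega)) arc_zero_last arc_V_last arc_V_ρ

end HDigraph

open HDigraph in
theorem stmt_13 (p q d : ℕ) (hp : 1 < p) (hq : 1 < q) (hd : 1 < d) (hdiv : d ∣ p * q)
    (hnomult : ∀ u < p * q / d, ∀ v : ℕ, mult p q d u v ≤ 1)
    (hheuchenne : ∀ u v w x : ℕ, u < p * q / d → v < p * q / d → w < p * q / d →
      x < p * q / d → arc p q d u w → arc p q d v w → arc p q d v x → arc p q d u x) :
    d ∣ Nat.gcd p q := by
  have hdiv' : d ∣ q * p := mul_comm p q ▸ hdiv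
  have hinj := noMultipleArcs_of_mult_le_one (by omega) hdiv hnomult
  have hdq := le_of_noMultipleArcs hp (by omega) hd hdiv hinj
  have hdp := le_of_noMultipleArcs hq (by omega) hd hdiv' (hinj.swap (by omega) (by omega))
  have hH : HeuchenneCondition p q d := hheuchenne
  exact Nat.dvd_gcd (dvd_of_heuchenneCondition (by omega) hdq hdp hdiv' (hH.swap (by omega)))
    (dvd_of_heuchenneCondition (by omega) hdp hdq hdiv hH)
end

section
/- The dual (arc-reversal) of H(p,q,d) is isomorphic to H(q,p,d); formally, the map sending vertex i of H(p,q,d) to vertex pq/d - 1 - i induces an isomorphism from the reverse of H(p,q,d) to H(q,p,d). -/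
/-!
Write `σ x = pq - 1 - x` for the reversal of `[0, pq)`. The transpose `τ_{p,q}` commutes with `σ`
and `τ_{q,p}` inverts it, so `τ_{q,p} ∘ σ ∘ τ_{p,q} = σ`. As `σ` sends offset `r` of block `w` to
offset `d - 1 - r` of block `N - 1 - w` (with `N = pq / d`), the assignment `a ↦ σ (τ_{p,q} a)`
matches the arcs from `u` to `v` in `H(p,q,d)` bijectively with the arcs from `N - 1 - v` to
`N - 1 - u` in `H(q,p,d)`.
-/

namespace Nat

theorem mul_sub_one_sub_eq {d N x : ℕ} (hx : x < d * N) :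
    d * N - 1 - x = d * (N - 1 - x / d) + (d - 1 - x % d) := by
  have hd : 0 < d := Nat.pos_of_lt_mul_right hx
  obtain ⟨m, hm⟩ := Nat.exists_eq_add_of_lt (Nat.div_lt_of_lt_mul hx)
  have hdecomp := Nat.div_add_mod x d
  have hmod := Nat.mod_lt x hd
  rw [hm, show x / d + m + 1 - 1 - x / d = m by omega, Nat.mul_add, Nat.mul_add, mul_one]
  omega

theorem mul_sub_one_sub_div {d N x : ℕ} (hx : x < d * N) :
    (d * N - 1 - x) / d = N - 1 - x / d := by
  have hd : 0 < d := Nat.pos_of_lt_mul_right hx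
  rw [mul_sub_one_sub_eq hx, Nat.mul_add_div hd,
    Nat.div_eq_of_lt (show d - 1 - x % d < d by omega), add_zero]

theorem mul_sub_one_sub_mod {d N x : ℕ} (hx : x < d * N) :
    (d * N - 1 - x) % d = d - 1 - x % d := by
  have hd : 0 < d := Nat.pos_of_lt_mul_right hx
  rw [mul_sub_one_sub_eq hx, Nat.mul_add_mod, Nat.mod_eq_of_lt (by omega)]

end Nat

def blockMult (f : ℕ → ℕ) (d u v : ℕ) : ℕ :=
  ((Finset.range d).filter (fun r => f (d * u + r) / d = v)).card

theorem mult_eq_blockMult (p q d u v : ℕ) : mult p q d u v = blockMult (tau p q) d u v := rfl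

section BlockMult

variable {f g : ℕ → ℕ} {d N : ℕ}

theorem blockMult_arc_reflect (hf : ∀ a < d * N, f a < d * N)
    (hgf : ∀ a < d * N, g (d * N - 1 - f a) = d * N - 1 - a) {u v r : ℕ} (hu : u < N) (hr : r < d)
    (h : f (d * u + r) / d = v) :
    d - 1 - f (d * u + r) % d < d ∧
      g (d * (N - 1 - v) + (d - 1 - f (d * u + r) % d)) / d = N - 1 - u ∧
      d - 1 - g (d * (N - 1 - v) + (d - 1 - f (d * u + r) % d)) % d = r := by
  have ha : d * u + r < d * N :=
    calc d * u + r < d * (u + 1) := by rw [Nat.mul_add_one]; omega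
      _ ≤ d * N := Nat.mul_le_mul_left d hu
  have hua : (d * u + r) / d = u := by
    rw [Nat.mul_add_div (Nat.zero_lt_of_lt hr), Nat.div_eq_of_lt hr, add_zero]
  have hra : (d * u + r) % d = r := by rw [Nat.mul_add_mod, Nat.mod_eq_of_lt hr]
  rw [← h, ← Nat.mul_sub_one_sub_eq (hf _ ha), hgf _ ha, Nat.mul_sub_one_sub_div ha,
    Nat.mul_sub_one_sub_mod ha, hua, hra]
  omega

theorem blockMult_rev (hf : ∀ a < d * N, f a < d * N) (hg : ∀ b < d * N, g b < d * N)
    (hgf : ∀ a < d * N, g (d * N - 1 - f a) = d * N - 1 - a)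
    (hfg : ∀ b < d * N, f (d * N - 1 - g b) = d * N - 1 - b) {u v : ℕ} (hu : u < N) (hv : v < N) :
    blockMult f d u v = blockMult g d (N - 1 - v) (N - 1 - u) := by
  have hu' : N - 1 - (N - 1 - u) = u := by omega
  have hv' : N - 1 - (N - 1 - v) = v := by omega
  have hv'' : N - 1 - v < N := by omega
  refine Finset.card_nbij' (fun r => d - 1 - f (d * u + r) % d)
    (fun s => d - 1 - g (d * (N - 1 - v) + s) % d) ?_ ?_ ?_ ?_ <;> intro r hr <;>
    simp only [Finset.coe_filter, Finset.mem_range, Set.mem_ofPred_eq] at hr ⊢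
  · exact (blockMult_arc_reflect hf hgf hu hr.1 hr.2).imp_right And.left
  · have back := blockMult_arc_reflect hg hfg hv'' hr.1 hr.2
    rw [hu', hv'] at back
    exact back.imp_right And.left
  · exact (blockMult_arc_reflect hf hgf hu hr.1 hr.2).2.2
  · have back := blockMult_arc_reflect hg hfg hv'' hr.1 hr.2
    rw [hu'] at back
    exact back.2.2

end BlockMult

section Tau

variable {p q a : ℕ}

theorem tau_div (ha : a < p * q) : tau p q a / p = q - 1 - a % q := by
  have hi : a / q < p := Nat.div_lt_of_lt_mul (by rwa [mul_comm])
  rw [tau, mul_comm, Nat.mul_add_div (Nat.zero_lt_of_lt hi),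
    Nat.div_eq_of_lt (Nat.sub_one_sub_lt_of_lt hi), add_zero]

theorem tau_mod (ha : a < p * q) : tau p q a % p = p - 1 - a / q := by
  have hi : a / q < p := Nat.div_lt_of_lt_mul (by rwa [mul_comm])
  rw [tau, Nat.mul_add_mod_of_lt (Nat.sub_one_sub_lt_of_lt hi)]

theorem tau_lt (ha : a < p * q) : tau p q a < q * p := by
  have hq : 0 < q := Nat.pos_of_lt_mul_left ha
  have hp : 0 < p := Nat.pos_of_lt_mul_right ha
  rw [← Nat.div_lt_iff_lt_mul hp, tau_div ha]
  exact Nat.sub_one_sub_lt_of_lt (Nat.mod_lt a hq)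

theorem tau_tau (ha : a < p * q) : tau q p (tau p q a) = a := by
  have hq : 0 < q := Nat.pos_of_lt_mul_left ha
  have hi : a / q < p := Nat.div_lt_of_lt_mul (by rwa [mul_comm])
  have hj : a % q < q := Nat.mod_lt a hq
  rw [tau, tau_mod ha, tau_div ha, Nat.sub_sub_self (by omega : a / q ≤ p - 1),
    Nat.sub_sub_self (by omega : a % q ≤ q - 1), Nat.div_add_mod']

theorem tau_mul_sub_one_sub (ha : a < p * q) :
    tau p q (p * q - 1 - a) = p * q - 1 - tau p q a := by
  have ha' : a < q * p := by rwa [mul_comm]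
  have ht : tau p q a < p * q := by rw [mul_comm]; exact tau_lt ha
  rw [tau, Nat.mul_comm p q, Nat.mul_sub_one_sub_mod ha', Nat.mul_sub_one_sub_div ha',
    Nat.mul_comm q p, Nat.mul_sub_one_sub_eq ht, tau_div ha, tau_mod ha, Nat.mul_comm]

end Tau

theorem stmt_14_general (p q d : ℕ) (hdiv : d ∣ p * q) :
    ∀ u < p * q / d, ∀ v < p * q / d,
      mult p q d u v = mult q p d (p * q / d - 1 - v) (p * q / d - 1 - u) := by
  intro u hu v hv
  have hqp : q * p = p * q := mul_comm q p
  have hN : d * (p * q / d) = p * q := Nat.mul_div_cancel' hdiv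
  rw [mult_eq_blockMult, mult_eq_blockMult]
  refine blockMult_rev ?_ ?_ ?_ ?_ hu hv <;> rw [hN]
  · exact fun a ha => hqp ▸ tau_lt ha
  · exact fun b hb => tau_lt (hqp ▸ hb)
  · intro a ha
    rw [← tau_mul_sub_one_sub ha, tau_tau (by omega)]
  · intro b hb
    rw [← hqp, ← tau_mul_sub_one_sub (hqp ▸ hb), tau_tau (by omega)]

theorem stmt_14 (p q d : ℕ) (hp : 1 < p) (hq : 1 < q) (hd : 1 < d) (hdiv : d ∣ p * q) :
    ∀ u < p * q / d, ∀ v < p * q / d,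
      mult p q d u v = mult q p d (p * q / d - 1 - v) (p * q / d - 1 - u) :=
  stmt_14_general p q d hdiv
end

section
/- For p' ∈ [1,n], the De Bruijn digraph B(d,n) is isomorphic to H(d^{p'}, d^{n+1-p'}, d) if and only if gcd(p', n+1) = 1. (Granting the result of Coudert et al. that B(d,n) ≅ H(d^{p'},d^{q'},d) with p'+q'-1=n iff the permutation g is cyclic, this reduces to: g is cyclic iff gcd(p',n+1)=1.) -/
/-- g is a cyclic permutation of [0,n-1]: every element's orbit is all of [0,n-1]. -/
def gCyclic (p' q' n : ℕ) : Prop :=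
  ∀ i < n, ∀ j < n, ∃ k : ℕ, (g p' q')^[k] i = j

def hRot (n p' i : ℕ) : ℕ := (i + p') % (n + 1)

lemma hRot_iterate (n p' : ℕ) (t i : ℕ) :
    (hRot n p')^[t] (i % (n + 1)) = (i + t * p') % (n + 1) := by
  induction t generalizing i with
  | zero => simp
  | succ t ih =>
      rw [Function.iterate_succ_apply]
      have h1 : hRot n p' (i % (n + 1)) = (i + p') % (n + 1) := by
        unfold hRot; rw [Nat.mod_add_mod]
      rw [h1, ih (i + p')]
      congr 1; ring

lemma hRot_reach (n p' : ℕ) (hc : Nat.gcd p' (n + 1) = 1) (i j : ℕ)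
    (hi : i < n + 1) (hj : j < n + 1) : ∃ t : ℕ, (hRot n p')^[t] i = j := by
  have : NeZero (n + 1) := ⟨Nat.succ_ne_zero n⟩
  set u := ZMod.unitOfCoprime p' hc with hu
  set z : ZMod (n + 1) := ((j : ZMod (n + 1)) - i) * (↑u⁻¹ : ZMod (n + 1)) with hz
  refine ⟨z.val, ?_⟩
  have : i % (n + 1) = i := Nat.mod_eq_of_lt hi
  rw [← this, hRot_iterate]
  have hcast : ((i + z.val * p' : ℕ) : ZMod (n + 1)) = (j : ZMod (n + 1)) := by
    push_cast
    rw [ZMod.natCast_val, ZMod.cast_id, hz]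
    have hup : (↑u : ZMod (n + 1)) = (p' : ZMod (n + 1)) := rfl
    rw [← hup]
    simp [mul_assoc]
  have := congrArg ZMod.val hcast
  rwa [ZMod.val_natCast, ZMod.val_natCast, Nat.mod_eq_of_lt hj] at this

lemma g_lt (n p' q' : ℕ) (hp : 1 ≤ p') (hpn : p' ≤ n) (hq : q' = n + 1 - p')
    (i : ℕ) (hi : i < n) : g p' q' i < n := by
  unfold g; split_ifs <;> omega

lemma g_eq_hRot (n p' q' : ℕ) (hp : 1 ≤ p') (hpn : p' ≤ n) (hq : q' = n + 1 - p')
    (i : ℕ) (hi : i < n) :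
    g p' q' i = if hRot n p' i = n then hRot n p' n else hRot n p' i := by
  unfold g hRot
  rcases lt_trichotomy (i + 1) q' with h1 | h1 | h1
  · have hlt : i + p' < n := by omega
    rw [if_pos h1, Nat.mod_eq_of_lt (by omega)]
    rw [if_neg (by omega)]
  · have hip : i + p' = n := by omega
    rw [if_neg (by omega), if_pos h1, hip, Nat.mod_eq_of_lt (by omega), if_pos rfl]
    have : n + p' = (n + 1) + (p' - 1) := by omega
    rw [this, Nat.add_mod_left, Nat.mod_eq_of_lt (by omega)]
  · have hge : n + 1 ≤ i + p' := by omega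
    have hsub : (i + p') % (n + 1) = i - q' := by
      rw [Nat.mod_eq_sub_mod hge, Nat.mod_eq_of_lt (by omega)]; omega
    rw [if_neg (by omega), if_neg (by omega), hsub, if_neg (by omega)]

lemma reach_of_hRot (n p' q' : ℕ) (hp : 1 ≤ p') (hpn : p' ≤ n)
    (hq : q' = n + 1 - p') (j : ℕ) (hj : j < n) :
    ∀ t : ℕ, ∀ i < n, (hRot n p')^[t] i = j → ∃ k, (g p' q')^[k] i = j := by
  intro t
  induction t using Nat.strong_induction_on with
  | _ t ih =>
    intro i hi ht
    match t with
    | 0 => exact ⟨0, ht⟩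
    | Nat.succ s =>
      rw [Function.iterate_succ_apply] at ht
      by_cases hm : hRot n p' i = n
      · -- g i = hRot n p' n; we skip the point n
        have hgn : g p' q' i = hRot n p' n := by
          rw [g_eq_hRot n p' q' hp hpn hq i hi, if_pos hm]
        rw [hm] at ht
        match s with
        | 0 =>
          simp only [Function.iterate_zero, id] at ht; omega
        | Nat.succ s' =>
          rw [Function.iterate_succ_apply] at ht
          have hlt : hRot n p' n < n := by
            unfold hRot
            have : n + p' = (n + 1) + (p' - 1) := by omega
            rw [this, Nat.add_mod_left, Nat.mod_eq_of_lt (by omega)]; omega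
          obtain ⟨k, hk⟩ := ih s' (by omega) (hRot n p' n) hlt ht
          exact ⟨k + 1, by rw [Function.iterate_succ_apply, hgn, hk]⟩
      · have hgn : g p' q' i = hRot n p' i := by
          rw [g_eq_hRot n p' q' hp hpn hq i hi, if_neg hm]
        have hlt : hRot n p' i < n := by
          have : hRot n p' i < n + 1 := Nat.mod_lt _ (by omega)
          omega
        obtain ⟨k, hk⟩ := ih s (by omega) (hRot n p' i) hlt ht
        exact ⟨k + 1, by rw [Function.iterate_succ_apply, hgn, hk]⟩

lemma dvd_iter (n p' q' : ℕ) (hp : 1 ≤ p') (hpn : p' ≤ n) (hq : q' = n + 1 - p')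
    (hn : 1 ≤ n) (c : ℕ) (hc2 : 2 ≤ c) (hcp : c ∣ p') (hcn : c ∣ n + 1) :
    ∀ k : ℕ, c ∣ (g p' q')^[k] 0 ∧ (g p' q')^[k] 0 < n := by
  have hcq : c ∣ q' := by
    rw [hq]; exact Nat.dvd_sub hcn hcp
  intro k
  induction k with
  | zero => simpa using Nat.lt_of_lt_of_le Nat.zero_lt_one hn
  | succ k ih =>
    obtain ⟨hd, hlt⟩ := ih
    rw [Function.iterate_succ_apply']
    set m := (g p' q')^[k] 0 with hm
    refine ⟨?_, g_lt n p' q' hp hpn hq m hlt⟩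
    unfold g
    split_ifs with h1 h2
    · exact Nat.dvd_add hd hcp
    · exfalso
      have hq2 : c ∣ m + 1 := by rw [h2]; exact hcq
      have h1 : c ∣ 1 := by simpa using Nat.dvd_sub hq2 hd
      have := Nat.le_of_dvd one_pos h1
      omega
    · exact Nat.dvd_sub hd hcq

/-- Granting the theorem of Coudert et al. (B(d,n) ≅ H(d^p', d^q', d) iff g is
cyclic, encoded as the hypothesis `hCoudert`), B(d,n) has an
OTIS(d^p', d^(n+1-p')) layout iff gcd(p', n+1) = 1. -/
theorem stmt_15 (d n p' q' : ℕ) (hd : 2 ≤ d) (hn : 1 ≤ n)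
    (hp : 1 ≤ p') (hpn : p' ≤ n) (hq : q' = n + 1 - p')
    (Iso : Prop) (hCoudert : Iso ↔ gCyclic p' q' n) :
    Iso ↔ Nat.gcd p' (n + 1) = 1 := by
  rw [hCoudert]
  constructor
  · intro hcyc
    by_contra hgcd
    set c := Nat.gcd p' (n + 1) with hc
    have hcp : c ∣ p' := Nat.gcd_dvd_left _ _
    have hcn : c ∣ n + 1 := Nat.gcd_dvd_right _ _
    have hc0 : c ≠ 0 := by
      intro h
      rw [h] at hcp
      have := Nat.eq_zero_of_zero_dvd hcp
      omega
    have hc2 : 2 ≤ c := by omega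
    have hcle : c ≤ p' := Nat.le_of_dvd (by omega) hcp
    have h1n : 1 < n := by omega
    obtain ⟨k, hk⟩ := hcyc 0 (by omega) 1 h1n
    have := (dvd_iter n p' q' hp hpn hq hn c hc2 hcp hcn k).1
    rw [hk] at this
    have := Nat.le_of_dvd one_pos this
    omega
  · intro hgcd i hi j hj
    obtain ⟨t, ht⟩ := hRot_reach n p' hgcd i j (by omega) (by omega)
    exact reach_of_hRot n p' q' hp hpn hq j hj t i hi ht
end

section
/- Let λ = gcd(p',q') divide n+1 = p'+q'. If λ ≥ 2, the permutation g on [0,n-1] is not cyclic, since 0 and 1 lie in different orbits (all elements of the orbit of 0 are ≡ 0 mod λ). -/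
/-! Every step of `g` adds `p'` or subtracts `q'`, except `q' - 1 ↦ p' - 1`; all three preserve the
residue modulo any common divisor `l` of `p'` and `q'`. So the orbit of `0` stays in `l ℕ` and never
reaches `1` once `l ≥ 2`. -/

theorem g_modEq {p' q' l : ℕ} (hp : 1 ≤ p') (hq : 1 ≤ q') (hpl : l ∣ p') (hql : l ∣ q') (i : ℕ) :
    g p' q' i ≡ i [MOD l] := by
  have hp0 : p' ≡ 0 [MOD l] := Nat.modEq_zero_iff_dvd.2 hpl
  have hq0 : q' ≡ 0 [MOD l] := Nat.modEq_zero_iff_dvd.2 hql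
  unfold g
  split_ifs with hlt heq
  · exact hp0.add_left i
  · obtain rfl : i = q' - 1 := by omega
    refine Nat.ModEq.add_right_cancel' 1 ?_
    rw [Nat.sub_add_cancel hp, Nat.sub_add_cancel hq]
    exact hp0.trans hq0.symm
  · obtain ⟨c, rfl⟩ : ∃ c, i = c + q' := ⟨i - q', by omega⟩
    rw [Nat.add_sub_cancel]
    exact (hq0.add_left c).symm

theorem iterate_g_modEq {p' q' l : ℕ} (hp : 1 ≤ p') (hq : 1 ≤ q') (hpl : l ∣ p') (hql : l ∣ q')
    (k i : ℕ) : (g p' q')^[k] i ≡ i [MOD l] :=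
  Function.Iterate.rec (· ≡ i [MOD l]) rfl (fun x hx => (g_modEq hp hq hpl hql x).trans hx) k

theorem stmt_17 (p' q' n : ℕ) (hp : 1 ≤ p') (hq : 1 ≤ q') (hn : p' + q' - 1 = n)
    (hl : 2 ≤ Nat.gcd p' q') :
    (¬ ∃ k : ℕ, (g p' q')^[k] 0 = 1) ∧
    ¬ (∀ i < n, ∀ j < n, ∃ k : ℕ, (g p' q')^[k] i = j) := by
  have h01 : ¬ ∃ k : ℕ, (g p' q')^[k] 0 = 1 := by
    rintro ⟨k, hk⟩
    have h10 := iterate_g_modEq hp hq (Nat.gcd_dvd_left p' q') (Nat.gcd_dvd_right p' q') k 0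
    rw [hk] at h10
    have := Nat.le_of_dvd one_pos (Nat.modEq_zero_iff_dvd.1 h10)
    omega
  have hp2 : 2 ≤ p' := hl.trans (Nat.le_of_dvd hp (Nat.gcd_dvd_left p' q'))
  exact ⟨h01, fun h => h01 (h 0 (by omega) 1 (by omega))⟩
end
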